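/- arXiv:2208.10428 — 2 statements merged into one kernel-verified Lean document; each statement's English description precedes it below -/
import Mathlib

section
/- For each equivalence class μ of [n]^{k+l} under entrywise permutation equivalence, the linear map L_μ : (ℝ^d)^{[n]^k} → (ℝ^{d'})^{[n]^l} defined by L_μ(A)_j = Σ_i 1[(i,j) ∈ μ] · A_i · w for a fixed matrix w ∈ ℝ^{d×d'} is permutation equivariant: L_μ(π · A) = π · L_μ(A) for all π ∈ S_n. -/
/-! Substitute `i ↦ π ∘ i` in the sum: invariance of `μ` under the diagonal action turns the
condition `(π ∘ i, j) ∈ μ` into `(i, π⁻¹ ∘ j) ∈ μ`. The summand `A_i · w` plays no role, so the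
identity holds for any function of `A_i` with values in an additive monoid. -/

section PermInvariantSet

variable {ι κ α : Type*} {μ : Set ((ι → α) × (κ → α))}

theorem mem_perm_left_iff_mem_perm_inv_right
    (hμ : ∀ (π : Equiv.Perm α) (i : ι → α) (j : κ → α),
      (i, j) ∈ μ ↔ ((fun a => π (i a)), (fun a => π (j a))) ∈ μ)
    (π : Equiv.Perm α) (i : ι → α) (j : κ → α) :
    ((fun a => π (i a)), j) ∈ μ ↔ (i, fun a => π⁻¹ (j a)) ∈ μ := by
  simpa only [Equiv.Perm.coe_inv, Equiv.symm_apply_apply] using hμ π⁻¹ (fun a => π (i a)) j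

theorem sum_ite_mem_perm_inv_eq {M : Type*} [Fintype α] [DecidableEq ι] [Fintype ι]
    [AddCommMonoid M] [DecidablePred (· ∈ μ)]
    (hμ : ∀ (π : Equiv.Perm α) (i : ι → α) (j : κ → α),
      (i, j) ∈ μ ↔ ((fun a => π (i a)), (fun a => π (j a))) ∈ μ)
    (π : Equiv.Perm α) (f : (ι → α) → M) (j : κ → α) :
    (∑ i : ι → α, if (i, j) ∈ μ then f (fun a => π⁻¹ (i a)) else 0) =
      ∑ i : ι → α, if (i, fun a => π⁻¹ (j a)) ∈ μ then f i else 0 := by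
  let πι : Equiv.Perm (ι → α) := Equiv.piCongrRight fun _ => π
  have hπι (i : ι → α) : πι i = fun a => π (i a) := rfl
  rw [← Equiv.sum_comp πι]
  refine Fintype.sum_congr _ _ fun i => ?_
  simp only [hπι, Equiv.Perm.coe_inv, Equiv.symm_apply_apply,
    mem_perm_left_iff_mem_perm_inv_right hμ]

end PermInvariantSet

theorem equivalence_class_linear_map_equivariant_general (n k l d d' : ℕ)
    (μ : Set ((Fin k → Fin n) × (Fin l → Fin n)))
    (hμ : ∀ (π : Equiv.Perm (Fin n)) (i : Fin k → Fin n) (j : Fin l → Fin n),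
      (i, j) ∈ μ ↔ ((fun a => π (i a)), (fun a => π (j a))) ∈ μ)
    (w : Matrix (Fin d) (Fin d') ℝ)
    [DecidablePred (· ∈ μ)] :
    ∀ (π : Equiv.Perm (Fin n)) (A : (Fin k → Fin n) → Fin d → ℝ)
      (j : Fin l → Fin n),
      (∑ i : Fin k → Fin n,
          if (i, j) ∈ μ then Matrix.vecMul (A (fun a => π⁻¹ (i a))) w else 0) =
        ∑ i : Fin k → Fin n,
          if (i, fun a => π⁻¹ (j a)) ∈ μ then Matrix.vecMul (A i) w else 0 :=
  fun π A j => sum_ite_mem_perm_inv_eq hμ π (fun i => Matrix.vecMul (A i) w) j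

/-- For an equivalence class `μ` of `[n]^k × [n]^l` (concatenated multi-indices
in `[n]^{k+l}`) under simultaneous entrywise permutation (i.e. `μ` is invariant
under the diagonal `S_n` action), the linear map
`L_μ(A)_j = Σ_i 1[(i,j) ∈ μ] · A_i · w` is permutation equivariant. -/
theorem equivalence_class_linear_map_equivariant (n k l d d' : ℕ)
    (hn : 0 < n) (hk : 0 < k) (hl : 0 < l) (hd : 0 < d) (hd' : 0 < d')
    (μ : Set ((Fin k → Fin n) × (Fin l → Fin n)))
    (hμ : ∀ (π : Equiv.Perm (Fin n)) (i : Fin k → Fin n) (j : Fin l → Fin n),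
      (i, j) ∈ μ ↔ ((fun a => π (i a)), (fun a => π (j a))) ∈ μ)
    (w : Matrix (Fin d) (Fin d') ℝ)
    [DecidablePred (· ∈ μ)] :
    ∀ (π : Equiv.Perm (Fin n)) (A : (Fin k → Fin n) → Fin d → ℝ)
      (j : Fin l → Fin n),
      (∑ i : Fin k → Fin n,
          if (i, j) ∈ μ then Matrix.vecMul (A (fun a => π⁻¹ (i a))) w else 0) =
        ∑ i : Fin k → Fin n,
          if (i, fun a => π⁻¹ (j a)) ∈ μ then Matrix.vecMul (A i) w else 0 :=
  equivalence_class_linear_map_equivariant_general n k l d d' μ hμ w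
end

section
/- Let L(A)_j = Σ_{I=1}^{min(k,l)} Σ_{i ∈ [n]^k} 1[|set(i) ∩ set(j)| = I] · A_i · w_I + Σ_{i ∈ [n]^k} A_i · w_0 + b for j ∈ [n]^l, applied only at injective j (otherwise output 0). Then L is permutation equivariant: for every π ∈ S_n and every tensor A : [n]^k → ℝ^d, L(π · A) = π · L(A). -/
open Finset

/-- The equivariant linear layer for uniform hypergraphs:
`L(A)_j = 1[j injective] · (Σ_{I=1}^{min(k,l)} Σ_i 1[|set(i)∩set(j)|=I] A_i w_I
+ Σ_i A_i w_0 + b)`. -/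
noncomputable def L (n k l d d' : ℕ) (w : ℕ → Matrix (Fin d) (Fin d') ℝ)
    (b : Fin d' → ℝ) (A : (Fin k → Fin n) → Fin d → ℝ)
    (j : Fin l → Fin n) : Fin d' → ℝ :=
  if Function.Injective j then
    (∑ I ∈ Finset.Icc 1 (min k l), ∑ i : Fin k → Fin n,
      if (Finset.image i Finset.univ ∩ Finset.image j Finset.univ).card = I
        then Matrix.vecMul (A i) (w I) else 0)
    + (∑ i : Fin k → Fin n, Matrix.vecMul (A i) (w 0)) + b
  else 0

theorem card_image_comp_inter_image_comp {ι κ α β : Type*} [Fintype ι] [Fintype κ]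
    [DecidableEq α] [DecidableEq β] {f : α → β} (hf : Function.Injective f)
    (i : ι → α) (j : κ → α) :
    (univ.image (fun a => f (i a)) ∩ univ.image (fun a => f (j a))).card =
      (univ.image i ∩ univ.image j).card := by
  rw [← card_image_of_injective _ hf, image_inter _ _ hf, image_image, image_image]
  rfl

theorem sum_overlap_comp_perm {ι κ α M : Type*} [Fintype ι] [DecidableEq ι] [Fintype κ]
    [Fintype α] [DecidableEq α] [AddCommMonoid M] (π : Equiv.Perm α) (j : κ → α)
    (F : ℕ → (ι → α) → M) :
    ∑ i : ι → α, F (univ.image i ∩ univ.image j).card (fun a => π⁻¹ (i a)) =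
      ∑ i : ι → α, F (univ.image i ∩ univ.image fun a => π⁻¹ (j a)).card i :=
  Fintype.sum_equiv (Equiv.piCongrRight fun _ => π⁻¹) _ _ fun i =>
    congrArg₂ F (card_image_comp_inter_image_comp π⁻¹.injective i j).symm rfl

theorem L_equivariant_general (n k l d d' : ℕ) (w : ℕ → Matrix (Fin d) (Fin d') ℝ)
    (b : Fin d' → ℝ) :
    ∀ (π : Equiv.Perm (Fin n)) (A : (Fin k → Fin n) → Fin d → ℝ)
      (j : Fin l → Fin n),
      L n k l d d' w b (fun i => A (fun a => π⁻¹ (i a))) j =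
        L n k l d d' w b A (fun a => π⁻¹ (j a)) := by
  intro π A j
  have hinj : Function.Injective (fun a => π⁻¹ (j a)) ↔ Function.Injective j :=
    π⁻¹.injective.of_comp_iff j
  have hsum : ∑ i : Fin k → Fin n, Matrix.vecMul (A fun a => π⁻¹ (i a)) (w 0) =
      ∑ i, Matrix.vecMul (A i) (w 0) :=
    (Equiv.piCongrRight fun _ => π⁻¹).sum_comp fun i => Matrix.vecMul (A i) (w 0)
  simp only [L, hinj, hsum]
  split_ifs
  · congr 2
    exact sum_congr rfl fun I _ =>
      sum_overlap_comp_perm π j fun c i => if c = I then Matrix.vecMul (A i) (w I) else 0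
  · rfl

/-- The layer `L` is permutation equivariant: `L(π·A) = π·L(A)`. -/
theorem L_equivariant (n k l d d' : ℕ) (hn : 0 < n) (hk : 0 < k) (hl : 0 < l)
    (hd : 0 < d) (hd' : 0 < d') (w : ℕ → Matrix (Fin d) (Fin d') ℝ)
    (b : Fin d' → ℝ) :
    ∀ (π : Equiv.Perm (Fin n)) (A : (Fin k → Fin n) → Fin d → ℝ)
      (j : Fin l → Fin n),
      L n k l d d' w b (fun i => A (fun a => π⁻¹ (i a))) j =
        L n k l d d' w b A (fun a => π⁻¹ (j a)) :=
  L_equivariant_general n k l d d' w b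
end
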